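/- Deletion of a MUS when a suffix acquires a second occurrence: let W = W[1..n] with n ≥ 2, and suppose S is the shortest suffix of W with #occ_W(S) = 2, and let its non-suffix occurrence be W[s..q] = S with q ≤ n − 1. Then the interval [s..q] belongs to MUS(W[1..n−1]) but does not belong to MUS(W). -/

import Mathlib

/-
Write `n = |W|`, `W' = W[1..n−1]` and `S = W[n−m+1..n]`. Deleting the last letter destroys
exactly one occurrence of each suffix of `W`, namely its suffix occurrence. So `S`, which occurs
twice in `W` (hence `[s..q] ∉ MUS(W)`), is unique in `W'`. The prefix `S[1..m−1]` still occurs at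
`s` and at `n−m+1` in `W'`. The suffix `S[2..m]` occurs at `s+1` and as a suffix of `W`, so by
minimality of `S` at least three times in `W`, hence at least twice in `W'`.
-/

variable {α : Type*}

/-- `occursAt T S p`: the string `S` occurs at the 1-based position `p` in `T`,
i.e. `1 ≤ p ≤ |T| − |S| + 1` and `T[p..p+|S|−1] = S`. -/
def occursAt (T S : List α) (p : ℕ) : Prop :=
  1 ≤ p ∧ p + S.length ≤ T.length + 1 ∧ (T.drop (p - 1)).take S.length = S

/-- `#occ_T(S)`: the number of positions at which `S` occurs in `T`. -/
noncomputable def occCount (T S : List α) : ℕ :=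
  {p : ℕ | occursAt T S p}.ncard

/-- `sub T i ℓ = T[i..i+ℓ−1]` (1-based substring of length `ℓ` starting at `i`). -/
def sub (T : List α) (i ℓ : ℕ) : List α := (T.drop (i - 1)).take ℓ

/-- Longest previous factor array (1-based): `LPF T i` is the largest `ℓ ≥ 0` such that
the prefix `T[i..i+ℓ−1]` of `T[i..n]` also occurs at some position `j < i` in `T`. -/
noncomputable def LPF (T : List α) (i : ℕ) : ℕ :=
  @Nat.findGreatest
    (fun ℓ => (i - 1) + ℓ ≤ T.length ∧ ∃ j, 1 ≤ j ∧ j < i ∧ occursAt T (sub T i ℓ) j)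
    (Classical.decPred _) T.length

/-- Longest repeating suffix array (1-based): `LRS T i` is the length of the longest
suffix of `T[1..i]` occurring at least twice in `T[1..i]`. -/
noncomputable def LRS (T : List α) (i : ℕ) : ℕ :=
  @Nat.findGreatest
    (fun ℓ => 2 ≤ occCount (T.take i) ((T.take i).drop (i - ℓ)))
    (Classical.decPred _) i

/-- `MUS T`: the set of (1-based) intervals `[s..t] ⊆ [1..n]` such that `T[s..t]` is
unique in `T` while `T[s+1..t]` and `T[s..t−1]` are repeating in `T`. -/
def MUS (T : List α) : Set (ℕ × ℕ) :=
  {st | 1 ≤ st.1 ∧ st.1 ≤ st.2 ∧ st.2 ≤ T.length ∧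
    occCount T (sub T st.1 (st.2 - st.1 + 1)) = 1 ∧
    2 ≤ occCount T (sub T (st.1 + 1) (st.2 - st.1)) ∧
    2 ≤ occCount T (sub T st.1 (st.2 - st.1))}

lemma setOf_occursAt_finite (T S : List α) : {p : ℕ | occursAt T S p}.Finite :=
  (Set.finite_Icc 1 (T.length + 1)).subset fun _ ⟨h1, h2, _⟩ => ⟨h1, by omega⟩

lemma two_le_occCount {T S : List α} {p q : ℕ} (hpq : p ≠ q)
    (hp : occursAt T S p) (hq : occursAt T S q) : 2 ≤ occCount T S := by
  rw [← Set.ncard_pair hpq]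
  exact Set.ncard_le_ncard (Set.pair_subset hp hq) (setOf_occursAt_finite T S)

lemma occCount_nil (T : List α) : occCount T [] = T.length + 1 := by
  have h : {p : ℕ | occursAt T [] p} = ↑(Finset.Icc 1 (T.length + 1)) := by
    ext p
    simp [occursAt]
  rw [occCount, h, Set.ncard_coe_finset, Nat.card_Icc, Nat.add_sub_cancel]

lemma sub_eq_of_occursAt {T S : List α} {p : ℕ} (h : occursAt T S p) :
    sub T p S.length = S :=
  h.2.2

lemma occursAt.take {T S : List α} {p : ℕ} (h : occursAt T S p) (k : ℕ) :
    occursAt T (S.take k) p := by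
  obtain ⟨h1, h2, h3⟩ := h
  refine ⟨h1, by grind, ?_⟩
  rw [← h3, List.take_take, List.length_take, ← h3, List.length_take]
  grind

lemma occursAt.drop {T S : List α} {p : ℕ} (h : occursAt T S p) {k : ℕ} (hk : k ≤ S.length) :
    occursAt T (S.drop k) (p + k) := by
  obtain ⟨h1, h2, h3⟩ := h
  refine ⟨by omega, by grind, ?_⟩
  rw [show p + k - 1 = p - 1 + k by omega, ← List.drop_drop, List.length_drop]
  conv_rhs => rw [← h3]
  rw [List.drop_take]

lemma occursAt_of_isSuffix {T S : List α} (h : S <:+ T) :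
    occursAt T S (T.length - S.length + 1) := by
  obtain ⟨u, rfl⟩ := h
  refine ⟨by omega, by simp; omega, ?_⟩
  simp

lemma occursAt_dropLast_iff {T S : List α} {p : ℕ} (hT : T ≠ []) :
    occursAt T.dropLast S p ↔ occursAt T S p ∧ p + S.length ≤ T.length := by
  have hn : 1 ≤ T.length := List.length_pos_iff.mpr hT
  simp only [occursAt, List.dropLast_eq_take, List.length_take, List.drop_take,
    List.take_take]
  constructor
  · rintro ⟨h1, h2, h3⟩
    refine ⟨⟨h1, by omega, ?_⟩, by omega⟩
    rwa [min_eq_left (by omega)] at h3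
  · rintro ⟨⟨h1, -, h3⟩, h4⟩
    refine ⟨h1, by omega, ?_⟩
    rwa [min_eq_left (by omega)]

lemma occCount_dropLast_add_one {T S : List α} (hT : T ≠ []) (h : S <:+ T) :
    occCount T.dropLast S + 1 = occCount T S := by
  have hset : {p | occursAt T.dropLast S p} =
      {p | occursAt T S p} \ {T.length - S.length + 1} := by
    ext p
    simp only [Set.mem_ofPred_eq, Set.mem_sdiff, Set.mem_singleton_iff, occursAt_dropLast_iff hT]
    constructor
    · rintro ⟨hp, hle⟩
      exact ⟨hp, by omega⟩
    · rintro ⟨hp, hne⟩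
      exact ⟨hp, by have := hp.1; have := hp.2.1; omega⟩
  rw [occCount, occCount, hset]
  exact Set.ncard_sdiff_singleton_add_one (occursAt_of_isSuffix h) (setOf_occursAt_finite T S)

lemma mem_MUS_iff_of_occursAt {T S : List α} {p : ℕ} (h : occursAt T S p) (hS : S ≠ []) :
    (p, p + S.length - 1) ∈ MUS T ↔
      occCount T S = 1 ∧ 2 ≤ occCount T S.tail ∧ 2 ≤ occCount T S.dropLast := by
  have hlen : 1 ≤ S.length := List.length_pos_iff.mpr hS
  have htail : sub T (p + 1) (S.length - 1) = S.tail := by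
    rw [← List.length_tail, sub_eq_of_occursAt (List.drop_one ▸ h.drop hlen)]
  have hdropLast : sub T p (S.length - 1) = S.dropLast := by
    rw [← List.length_dropLast, sub_eq_of_occursAt (List.dropLast_eq_take ▸ h.take _)]
  have hbounds : 1 ≤ p ∧ p ≤ p + S.length - 1 ∧ p + S.length - 1 ≤ T.length := by
    have := h.1
    have := h.2.1
    omega
  simp only [MUS, Set.mem_ofPred_eq]
  rw [show p + S.length - 1 - p + 1 = S.length by omega,
    show p + S.length - 1 - p = S.length - 1 by omega, sub_eq_of_occursAt h, htail, hdropLast]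
  tauto

lemma two_le_occCount_dropLast_dropLast {T S : List α} {p : ℕ} (hT : T ≠ []) (hS : S <:+ T)
    (hS0 : S ≠ []) (h : occursAt T S p) (hp : p + S.length ≤ T.length) :
    2 ≤ occCount T.dropLast S.dropLast := by
  have := List.length_pos_iff.mpr hS0
  rw [List.dropLast_eq_take (l := S)]
  refine two_le_occCount (by omega : p ≠ T.length - S.length + 1)
    ((occursAt_dropLast_iff hT).2 ⟨h.take _, ?_⟩)
    ((occursAt_dropLast_iff hT).2 ⟨(occursAt_of_isSuffix hS).take _, ?_⟩) <;>
  · have := h.1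
    simp only [List.length_take]
    omega

lemma three_le_occCount_tail_of_shortest {W : List α} {m s : ℕ} (hm : 1 ≤ m)
    (hshort : ∀ m', 1 ≤ m' → m' < m → occCount W (W.drop (W.length - m')) ≠ 2)
    (hocc : occursAt W (W.drop (W.length - m)) s) (hq : s + m ≤ W.length) :
    3 ≤ occCount W (W.drop (W.length - m)).tail := by
  have hs : 1 ≤ s := hocc.1
  have hSlen : (W.drop (W.length - m)).length = m := by simp only [List.length_drop]; omega
  rcases hm.eq_or_lt with hm1 | hm2
  · rw [List.eq_nil_of_length_eq_zero (l := (W.drop (W.length - m)).tail)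
      (by simp only [List.length_tail]; omega), occCount_nil]
    omega
  · have hocc_suffix := occursAt_of_isSuffix (List.drop_suffix (W.length - m) W)
    have htwo := List.drop_one ▸ two_le_occCount (by omega) (hocc.drop (k := 1) (by omega))
      (hocc_suffix.drop (k := 1) (by omega))
    have hne := hshort (m - 1) (by omega) (by omega)
    rw [show W.length - (m - 1) = W.length - m + 1 by omega, ← List.tail_drop] at hne
    omega

theorem mus_deleted_general (W : List α) (m s : ℕ)
    (hm : 1 ≤ m)
    (h2 : occCount W (W.drop (W.length - m)) = 2)
    (hshort : ∀ m', 1 ≤ m' → m' < m → occCount W (W.drop (W.length - m')) ≠ 2)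
    (hocc : occursAt W (W.drop (W.length - m)) s)
    (hq : s + m ≤ W.length) :
    (s, s + m - 1) ∈ MUS (W.take (W.length - 1)) ∧ (s, s + m - 1) ∉ MUS W := by
  have htail := three_le_occCount_tail_of_shortest hm hshort hocc hq
  set S := W.drop (W.length - m)
  have hSlen : S.length = m := by simp only [S, List.length_drop]; omega
  have hSne : S ≠ [] := List.ne_nil_of_length_pos (by omega)
  have hW : W ≠ [] := List.ne_nil_of_length_pos (by omega)
  have hsuffix : S <:+ W := List.drop_suffix _ _
  have hocc' : occursAt W.dropLast S s := (occursAt_dropLast_iff hW).2 ⟨hocc, by omega⟩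
  have hunique : occCount W.dropLast S + 1 = 2 := h2 ▸ occCount_dropLast_add_one hW hsuffix
  have htail' := occCount_dropLast_add_one hW ((List.tail_suffix S).trans hsuffix)
  have hprefix := two_le_occCount_dropLast_dropLast hW hsuffix hSne hocc (by omega)
  rw [← List.dropLast_eq_take, ← hSlen, mem_MUS_iff_of_occursAt hocc' hSne,
    mem_MUS_iff_of_occursAt hocc hSne]
  exact ⟨⟨by omega, by omega, hprefix⟩, fun h => by omega⟩

/-- deletion of a MUS when a suffix acquires a second occurrence: if `S`
(of length `m ≥ 1`) is the shortest suffix of `W = W[1..n]` with `#occ_W(S) = 2` and its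
non-suffix occurrence is `W[s..q] = S` with `q = s + m − 1 ≤ n − 1`, then `[s..q]`
belongs to `MUS(W[1..n−1])` but not to `MUS(W)`. -/
theorem mus_deleted (W : List α) (hn : 2 ≤ W.length) (m s : ℕ)
    (hm : 1 ≤ m) (hmn : m ≤ W.length)
    (h2 : occCount W (W.drop (W.length - m)) = 2)
    (hshort : ∀ m', 1 ≤ m' → m' < m → occCount W (W.drop (W.length - m')) ≠ 2)
    (hocc : occursAt W (W.drop (W.length - m)) s)
    (hq : s + m ≤ W.length) :
    (s, s + m - 1) ∈ MUS (W.take (W.length - 1)) ∧ (s, s + m - 1) ∉ MUS W :=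
  mus_deleted_general W m s hm h2 hshort hocc hq
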